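/- Define operators on ℚ(q)[X₀,X₁] on monomials by e(X₀^aX₁^b) = [b] X₀^{a+1}X₁^{b-1} and t(X₀^aX₁^b) = −[b] X₀^aX₁^b. Then t²e + e t² = (q + q⁻¹) t e t + e as operators. -/

import Mathlib

/-!
Both sides of the relation send `X₀^a X₁^b` to a multiple of `X₀^(a+1) X₁^(b-1)`: the left side
with coefficient `[b]([b-1]² + [b]²)`, the right side with `[b]((q + q⁻¹)[b][b-1] + 1)`.
For `b = 0` both vanish, and otherwise the two agree by the identity
`[n]² + [n+1]² = [2][n+1][n] + 1`, which after clearing the denominator `(q - q⁻¹)²` is a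
Laurent polynomial identity in `q`.
-/

noncomputable section

/-- The field ℚ(q) of rational functions over ℚ. -/
abbrev K : Type := RatFunc ℚ

/-- The indeterminate q. -/
def q : K := RatFunc.X

/-- The quantum integer [m]. -/
def qint (m : ℤ) : K := (q ^ m - q ^ (-m)) / (q - q⁻¹)

/-- The monomial X₀^a X₁^b in ℚ(q)[X₀,X₁]. -/
def mono (a b : ℕ) : MvPolynomial (Fin 2) K :=
  MvPolynomial.monomial (Finsupp.single 0 a + Finsupp.single 1 b) (1 : K)

lemma q_ne_zero : q ≠ 0 := RatFunc.X_ne_zero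

lemma q_sub_inv_ne_zero : q - q⁻¹ ≠ 0 := by
  intro h
  have hsq : q * q - 1 = 0 := by
    simpa [sub_mul, inv_mul_cancel₀ q_ne_zero] using congrArg (· * q) h
  have hpoly : (Polynomial.X * Polynomial.X - 1 : Polynomial ℚ) = 0 :=
    RatFunc.algebraMap_injective ℚ (by simpa [q, RatFunc.algebraMap_X] using hsq)
  simpa using congrArg (Polynomial.eval 0) hpoly

lemma qint_zero : qint 0 = 0 := by simp [qint]

lemma zpow_sub_zpow_neg_sq_add_sq {F : Type*} [Field F] {x : F} (hx : x ≠ 0) (n : ℤ) :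
    (x ^ n - x ^ (-n)) ^ 2 + (x ^ (n + 1) - x ^ (-(n + 1))) ^ 2
      = (x + x⁻¹) * (x ^ (n + 1) - x ^ (-(n + 1))) * (x ^ n - x ^ (-n)) + (x - x⁻¹) ^ 2 := by
  have hn : x ^ n * x ^ (-n) = 1 := by rw [← zpow_add₀ hx, add_neg_cancel, zpow_zero]
  have h1 : x * x⁻¹ = 1 := mul_inv_cancel₀ hx
  simp only [neg_add, zpow_add₀ hx, zpow_one, zpow_neg_one]
  linear_combination (x ^ 2 + x⁻¹ ^ 2 - 2) * hn - ((x ^ n) ^ 2 + (x ^ (-n)) ^ 2 - 2) * h1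

lemma qint_sq_add_qint_add_one_sq (n : ℤ) :
    qint n ^ 2 + qint (n + 1) ^ 2 = (q + q⁻¹) * qint (n + 1) * qint n + 1 := by
  have key := zpow_sub_zpow_neg_sq_add_sq q_ne_zero n
  have hd := q_sub_inv_ne_zero
  simp only [qint]
  generalize q ^ n - q ^ (-n) = A, q ^ (n + 1) - q ^ (-(n + 1)) = B at key ⊢
  generalize q - q⁻¹ = D at key hd ⊢
  generalize q + q⁻¹ = c at key ⊢
  field_simp
  linear_combination key

lemma mono_eq_monomial (d : Fin 2 →₀ ℕ) : mono (d 0) (d 1) = MvPolynomial.monomial d 1 := by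
  rw [mono, show Finsupp.single 0 (d 0) + Finsupp.single 1 (d 1) = d from
    Finsupp.ext fun i => by fin_cases i <;> simp]

lemma linearMap_ext_mono {M : Type*} [AddCommMonoid M] [Module K M]
    {f g : MvPolynomial (Fin 2) K →ₗ[K] M} (h : ∀ a b, f (mono a b) = g (mono a b)) :
    f = g := by
  refine MvPolynomial.linearMap_ext fun d => LinearMap.ext_ring ?_
  simpa [mono_eq_monomial] using h (d 0) (d 1)

/-- the relation t²e + et² = (q+q⁻¹)tet + e in the
oscillator representation of ⁱU(A_{2r+2,1}). -/
theorem stmt15 (e t : Module.End K (MvPolynomial (Fin 2) K))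
    (he : ∀ a b : ℕ, e (mono a b) = qint (b : ℤ) • mono (a + 1) (b - 1))
    (ht : ∀ a b : ℕ, t (mono a b) = (-qint (b : ℤ)) • mono a b) :
    t ^ 2 * e + e * t ^ 2 = (q + q⁻¹) • (t * e * t) + e := by
  refine linearMap_ext_mono fun a b => ?_
  rcases b with _ | k
  · simp [pow_two, he, ht, qint_zero]
  · simp only [pow_two, LinearMap.add_apply, Module.End.mul_apply, LinearMap.smul_apply,
      he, ht, map_smul, smul_smul, Nat.add_sub_cancel, Nat.cast_add, Nat.cast_one, ← add_smul]
    congr 1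
    linear_combination qint ((k : ℤ) + 1) * qint_sq_add_qint_add_one_sq (k : ℤ)
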